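/- Let p be a prime, q a positive integer divisible by p, m ≥ 3, and take δ = 0 in the stated construction, so that the sequences a^t_σ of length p^m are indexed by σ, t ∈ {0,…,p^k−1}. Then the collection {A^0, …, A^{p^k−1}} with A^t = {a^t_0,…,a^t_{p^k−1}} is a (p^k, p^k, p^m)-CCC; that is: (i) for every t, Σ_{σ=0}^{p^k−1} A(a^t_σ)(0) = p^{k+m} and Σ_{σ=0}^{p^k−1} A(a^t_σ)(τ) = 0 for all τ with 1 ≤ |τ| ≤ p^m−1; and (ii) for all t₁ ≠ t₂, Σ_{σ=0}^{p^k−1} C(a^{t₁}_σ, a^{t₂}_σ)(τ) = 0 for all τ with |τ| ≤ p^m−1. -/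

import Mathlib

open Finset

/-- `i`-th (1-based) base-`p` digit of `r`, i.e. `r_i` where `r = Σ_i r_i p^(i-1)`. -/
def dig (p r i : ℕ) : ℕ := r / p ^ (i - 1) % p

/-- `ω_q^x = exp(2π√-1·x/q)` for `x ∈ ℤ_q`. -/
noncomputable def eomega (q : ℕ) (x : ZMod q) : ℂ :=
  Complex.exp (2 * Real.pi * Complex.I * (x.val : ℂ) / (q : ℂ))

/-- Aperiodic cross-correlation of two length-`N` `ℤ_q`-valued sequences at integer shift `τ`. -/
noncomputable def ccorr (q N : ℕ) (u v : ℕ → ZMod q) (τ : ℤ) : ℂ :=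
  if 0 ≤ τ then ∑ i ∈ Finset.range (N - τ.toNat), eomega q (u i - v (i + τ.toNat))
  else ∑ i ∈ Finset.range (N - (-τ).toNat), eomega q (u (i + (-τ).toNat) - v i)

/-- Aperiodic autocorrelation. -/
noncomputable def acorr (q N : ℕ) (u : ℕ → ZMod q) (τ : ℤ) : ℂ := ccorr q N u u τ

/-- Entry `a^t_{σ,r}` of the construction: with `(r_1,…,r_m)` the `p`-ary digits of `r`,
`a^t_σ(r) = (q/p) Σ_β Σ_γ r_{π_β(γ)} r_{π_β(γ+1)} + Σ_l λ_l r_l + λ_0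
 + (q/p)(Σ_β σ_β r_{π_β(1)} + Σ_β t_β r_{π_β(m_β)} + Σ_β t_{k+β} r_{m-δ+β})`. -/
def aseq (p q m δ k : ℕ) (mcard : ℕ → ℕ) (pmap : ℕ → ℕ → ℕ) (lam : ℕ → ZMod q)
    (t σ r : ℕ) : ZMod q :=
  (((q / p) * ∑ β ∈ Finset.Icc 1 k, ∑ γ ∈ Finset.Icc 1 (mcard β - 1),
      dig p r (pmap β γ) * dig p r (pmap β (γ + 1)) : ℕ) : ZMod q)
  + ∑ l ∈ Finset.Icc 1 m, lam l * (dig p r l : ZMod q) + lam 0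
  + (((q / p) * (∑ β ∈ Finset.Icc 1 k, dig p σ β * dig p r (pmap β 1)
      + ∑ β ∈ Finset.Icc 1 k, dig p t β * dig p r (pmap β (mcard β))
      + ∑ β ∈ Finset.Icc 1 δ, dig p t (k + β) * dig p r (m - δ + β)) : ℕ) : ZMod q)

/-!
Sum over `σ` first: `σ` enters `a^t_σ(r)` only through `(q/p) Σ_β σ_β r_{π_β(1)}`, so
`Σ_σ ω^(a^{t₁}_σ(i) - a^{t₂}_σ(i + s))` equals `p^k ω^(a^{t₁}_0(i) - a^{t₂}_0(i + s))` when `i` and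
`i + s` agree in every digit `r_{π_β(1)}`, and `0` otherwise. The surviving terms fall into orbits
of size `p`, obtained by letting one digit `L` run through `0, …, p - 1` simultaneously in `i` and
in `i + s`. For `s = 0`, `t₁ ≠ t₂`, take `L = π_β(m_β)` for a chain `β` with `t₁_β ≠ t₂_β`. For
`s > 0`, walk along the first chain on which the digits of `i` and `i + s` differ and take the
position just before the first difference (the chains start with agreeing digits). As `i` and
`i + s` agree at `L`, changing that digit in both keeps their difference `s` and the set of
positions where they differ, so `L` is constant along the orbit.
Along an orbit the exponent moves by `(q/p)(v - d)(a - b)` with digits `a ≠ b`, so every orbit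
contributes a full sum of nontrivial `p`-th roots of unity, which vanishes. Negative shifts follow
by complex conjugation.
-/

def setDigit (p r l v : ℕ) : ℕ := r % p ^ (l - 1) + v * p ^ (l - 1) + r / p ^ l * p ^ l

section Digits

variable {p : ℕ}

lemma dig_lt (hp : 0 < p) (r l : ℕ) : dig p r l < p := Nat.mod_lt _ hp

lemma dig_eq_dig_of_mod_eq {x y l : ℕ} (hl : 1 ≤ l) (h : x % p ^ l = y % p ^ l) :
    dig p x l = dig p y l := by
  obtain ⟨n, rfl⟩ := Nat.exists_eq_add_of_le' hl
  simp only [dig, Nat.add_sub_cancel, ← Nat.mod_mul_right_div_self, ← pow_succ, h]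

lemma dig_eq_dig_of_div_eq {x y n l : ℕ} (hnl : n < l) (h : x / p ^ n = y / p ^ n) :
    dig p x l = dig p y l := by
  have hpow : p ^ (l - 1) = p ^ n * p ^ (l - 1 - n) := by rw [← pow_add]; congr 1; omega
  simp only [dig, hpow, ← Nat.div_div_eq_div_mul, h]

lemma setDigit_eq_add_mul (n r v : ℕ) :
    setDigit p r (n + 1) v = r % p ^ n + (v + r / p ^ (n + 1) * p) * p ^ n := by
  rw [setDigit, Nat.add_sub_cancel, pow_succ]
  ring

lemma setDigit_mod {l : ℕ} (hl : 1 ≤ l) (r v : ℕ) :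
    setDigit p r l v % p ^ (l - 1) = r % p ^ (l - 1) := by
  obtain ⟨n, rfl⟩ := Nat.exists_eq_add_of_le' hl
  rw [setDigit_eq_add_mul, Nat.add_sub_cancel, Nat.add_mul_mod_self_right, Nat.mod_mod]

lemma setDigit_div (hp : 0 < p) {l : ℕ} (hl : 1 ≤ l) (r : ℕ) {v : ℕ} (hv : v < p) :
    setDigit p r l v / p ^ l = r / p ^ l := by
  obtain ⟨n, rfl⟩ := Nat.exists_eq_add_of_le' hl
  have hlow : r % p ^ n + v * p ^ n < p ^ (n + 1) :=
    calc r % p ^ n + v * p ^ n < p ^ n + v * p ^ n := by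
          gcongr; exact Nat.mod_lt r (pow_pos hp n)
      _ = (v + 1) * p ^ n := by ring
      _ ≤ p ^ (n + 1) := by rw [pow_succ']; gcongr; exact hv
  rw [setDigit, Nat.add_sub_cancel, Nat.add_mul_div_right _ _ (pow_pos hp _),
    Nat.div_eq_of_lt hlow, zero_add]

lemma dig_setDigit_self (hp : 0 < p) {l : ℕ} (hl : 1 ≤ l) (r : ℕ) {v : ℕ} (hv : v < p) :
    dig p (setDigit p r l v) l = v := by
  obtain ⟨n, rfl⟩ := Nat.exists_eq_add_of_le' hl
  rw [dig, setDigit_eq_add_mul, Nat.add_sub_cancel, Nat.add_mul_div_right _ _ (pow_pos hp _),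
    Nat.div_eq_of_lt (Nat.mod_lt _ (pow_pos hp _)), zero_add, Nat.add_mul_mod_self_right,
    Nat.mod_eq_of_lt hv]

lemma dig_setDigit_of_ne (hp : 0 < p) {l l' : ℕ} (hl : 1 ≤ l) (hl' : 1 ≤ l') (hne : l' ≠ l)
    (r : ℕ) {v : ℕ} (hv : v < p) : dig p (setDigit p r l v) l' = dig p r l' := by
  rcases Nat.lt_or_gt_of_ne hne with hlt | hgt
  · apply dig_eq_dig_of_mod_eq hl'
    have hdvd : p ^ l' ∣ p ^ (l - 1) := pow_dvd_pow p (by omega)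
    rw [← Nat.mod_mod_of_dvd _ hdvd, setDigit_mod hl, Nat.mod_mod_of_dvd _ hdvd]
  · exact dig_eq_dig_of_div_eq hgt (setDigit_div hp hl r hv)

lemma setDigit_dig {l : ℕ} (hl : 1 ≤ l) (r : ℕ) : setDigit p r l (dig p r l) = r := by
  obtain ⟨n, rfl⟩ := Nat.exists_eq_add_of_le' hl
  have h : r / p ^ n % p + r / p ^ (n + 1) * p = r / p ^ n := by
    rw [pow_succ, ← Nat.div_div_eq_div_mul]; exact Nat.mod_add_div' _ _
  rw [setDigit_eq_add_mul, dig, Nat.add_sub_cancel, h, Nat.mod_add_div']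

lemma setDigit_setDigit (hp : 0 < p) {l : ℕ} (hl : 1 ≤ l) (r : ℕ) {v : ℕ} (hv : v < p) (w : ℕ) :
    setDigit p (setDigit p r l v) l w = setDigit p r l w := by
  rw [setDigit, setDigit_mod hl, setDigit_div hp hl r hv, setDigit]

lemma setDigit_add_dig_mul_pow {l : ℕ} (hl : 1 ≤ l) (r v : ℕ) :
    setDigit p r l v + dig p r l * p ^ (l - 1) = r + v * p ^ (l - 1) := by
  have h := setDigit_dig (p := p) hl r
  simp only [setDigit] at h ⊢
  omega

lemma setDigit_lt (hp : 0 < p) {m l : ℕ} (hl : 1 ≤ l) (hlm : l ≤ m) {r : ℕ} (hr : r < p ^ m)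
    {v : ℕ} (hv : v < p) : setDigit p r l v < p ^ m := by
  have hpow : p ^ m = p ^ (m - l) * p ^ l := by rw [← pow_add, Nat.sub_add_cancel hlm]
  rw [hpow, ← Nat.div_lt_iff_lt_mul (pow_pos hp l), setDigit_div hp hl r hv,
    Nat.div_lt_iff_lt_mul (pow_pos hp l), ← hpow]
  exact hr

lemma eq_of_dig_eq {m r s : ℕ} (hr : r < p ^ m) (hs : s < p ^ m)
    (h : ∀ l ∈ Icc 1 m, dig p r l = dig p s l) : r = s := by
  have key : finFunctionFinEquiv.symm (⟨r, hr⟩ : Fin (p ^ m))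
      = finFunctionFinEquiv.symm (⟨s, hs⟩ : Fin (p ^ m)) := by
    funext i
    ext
    simpa [finFunctionFinEquiv_symm_apply_val, dig] using h (i + 1) (by simp)
  simpa using finFunctionFinEquiv.symm.injective key

lemma prod_Icc_one_eq_prod_fin {M : Type*} [CommMonoid M] (k : ℕ) (g : ℕ → M) :
    ∏ β ∈ Icc 1 k, g β = ∏ i : Fin k, g (i + 1) := by
  rw [Fin.prod_univ_eq_prod_range (fun i => g (i + 1)), range_eq_Ico, prod_Ico_add']
  congr 1

lemma sum_range_pow_prod_dig {M : Type*} [CommSemiring M] (k : ℕ) (f : ℕ → ℕ → M) :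
    ∑ σ ∈ range (p ^ k), ∏ β ∈ Icc 1 k, f β (dig p σ β) = ∏ β ∈ Icc 1 k, ∑ v ∈ range p, f β v := by
  simp only [prod_Icc_one_eq_prod_fin]
  rw [Finset.sum_range (fun σ => ∏ i : Fin k, f (i + 1) (dig p σ (i + 1))),
    ← finFunctionFinEquiv.sum_comp]
  simp only [Finset.sum_range (f _), Fintype.prod_sum]
  refine Fintype.sum_congr _ _ fun g => Fintype.prod_congr _ _ fun i => ?_
  have h := finFunctionFinEquiv_symm_apply_val (finFunctionFinEquiv g) i
  rw [Equiv.symm_apply_apply] at h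
  rw [dig, Nat.add_sub_cancel, ← h]

end Digits

lemma dig_setDigit_eq_dig_setDigit_iff {p : ℕ} (hp : 0 < p) {i j l L v : ℕ} (hl : 1 ≤ l)
    (hL : 1 ≤ L) (hv : v < p) (hagree : dig p i L = dig p j L) :
    dig p (setDigit p i L v) l = dig p (setDigit p j L v) l ↔ dig p i l = dig p j l := by
  rcases eq_or_ne l L with rfl | hne
  · simp only [dig_setDigit_self hp hL _ hv, hagree]
  · rw [dig_setDigit_of_ne hp hL hl hne _ hv, dig_setDigit_of_ne hp hL hl hne _ hv]

lemma setDigit_add_of_dig_eq {p i s L : ℕ} (hL : 1 ≤ L) (h : dig p i L = dig p (i + s) L)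
    (v : ℕ) : setDigit p i L v + s = setDigit p (i + s) L v := by
  have hi := setDigit_add_dig_mul_pow (p := p) hL i v
  have hj := setDigit_add_dig_mul_pow (p := p) hL (i + s) v
  rw [← h] at hj
  omega

def digitDiff (p m i j : ℕ) : Finset ℕ := (Icc 1 m).filter fun l => dig p i l ≠ dig p j l

lemma digitDiff_setDigit {p m i j L v : ℕ} (hp : 0 < p) (hL : 1 ≤ L) (hv : v < p)
    (hagree : dig p i L = dig p j L) :
    digitDiff p m (setDigit p i L v) (setDigit p j L v) = digitDiff p m i j :=
  filter_congr fun _ hl =>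
    not_congr (dig_setDigit_eq_dig_setDigit_iff hp (mem_Icc.1 hl).1 hL hv hagree)

lemma sum_eq_zero_of_sum_setDigit_eq_zero {M : Type*} [AddCommGroup M] [IsAddTorsionFree M]
    {p : ℕ} (hp : 0 < p) {T : Finset ℕ} {F : ℕ → M} {pos : ℕ → ℕ}
    (hpos : ∀ i ∈ T, 1 ≤ pos i) (hmem : ∀ i ∈ T, ∀ v < p, setDigit p i (pos i) v ∈ T)
    (hinv : ∀ i ∈ T, ∀ v < p, pos (setDigit p i (pos i) v) = pos i)
    (horbit : ∀ i ∈ T, ∑ v ∈ range p, F (setDigit p i (pos i) v) = 0) :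
    ∑ i ∈ T, F i = 0 := by
  let φ : ℕ × ℕ → ℕ × ℕ := fun x => (setDigit p x.1 (pos x.1) x.2, dig p x.1 (pos x.1))
  have hφ : ∀ x ∈ T ×ˢ range p, φ x ∈ T ×ˢ range p := fun x hx => by
    rw [mem_product, mem_range] at hx ⊢
    exact ⟨hmem _ hx.1 _ hx.2, dig_lt hp _ _⟩
  have hφφ : ∀ x ∈ T ×ˢ range p, φ (φ x) = x := fun x hx => by
    rw [mem_product, mem_range] at hx
    simp only [φ, hinv _ hx.1 _ hx.2, setDigit_setDigit hp (hpos _ hx.1) _ hx.2,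
      setDigit_dig (hpos _ hx.1), dig_setDigit_self hp (hpos _ hx.1) _ hx.2]
  have key : p • ∑ i ∈ T, F i = ∑ i ∈ T, ∑ v ∈ range p, F (setDigit p i (pos i) v) :=
    calc p • ∑ i ∈ T, F i = ∑ x ∈ T ×ˢ range p, F x.1 := by
          rw [sum_product, smul_sum]
          simp only [sum_const, card_range]
      _ = ∑ x ∈ T ×ˢ range p, F (φ x).1 :=
          (sum_nbij' φ φ hφ hφ hφφ hφφ fun _ _ => rfl).symm
      _ = _ := sum_product _ _ _
  rwa [sum_eq_zero horbit, nsmul_eq_zero_iff_right hp.ne'] at key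

lemma AddChar.map_sum_eq_prod {ι A M : Type*} [AddCommMonoid A] [CommMonoid M]
    (ψ : AddChar A M) (s : Finset ι) (f : ι → A) : ψ (∑ i ∈ s, f i) = ∏ i ∈ s, ψ (f i) := by
  classical
  induction s using Finset.induction_on with
  | empty => simp
  | insert a s ha ih => rw [sum_insert ha, prod_insert ha, AddChar.map_add_eq_mul, ih]

lemma nsmul_natCast_div_mul_eq_zero {p q : ℕ} (hpq : p ∣ q) (z : ZMod q) :
    p • (((q / p : ℕ) : ZMod q) * z) = 0 := by
  rw [nsmul_eq_mul, ← mul_assoc, ← Nat.cast_mul, Nat.mul_div_cancel' hpq, ZMod.natCast_self,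
    zero_mul]

section Characters

variable {p q : ℕ} [NeZero q]

lemma eomega_eq_stdAddChar (x : ZMod q) : eomega q x = ZMod.stdAddChar x := by
  rw [ZMod.stdAddChar_apply, ZMod.toCircle_apply]
  rfl

lemma sum_range_stdAddChar_pow_eq_zero {y : ZMod q} (hy : p • y = 0) (hy₀ : y ≠ 0) :
    ∑ v ∈ range p, ZMod.stdAddChar y ^ v = 0 := by
  have hne : ZMod.stdAddChar y ≠ 1 := by
    rwa [Ne, ← AddChar.map_zero_eq_one (ZMod.stdAddChar (N := q)),
      ZMod.injective_stdAddChar.eq_iff]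
  rw [geom_sum_eq hne, ← AddChar.map_nsmul_eq_pow, hy, AddChar.map_zero_eq_one, sub_self,
    zero_div]

lemma natCast_div_mul_sub_eq_zero_iff (hpq : p ∣ q) {a b : ℕ} (ha : a < p) (hb : b < p) :
    ((q / p : ℕ) : ZMod q) * ((a : ZMod q) - (b : ZMod q)) = 0 ↔ a = b := by
  have hq : 0 < q := NeZero.pos q
  have hqp : 0 < q / p := Nat.div_pos (Nat.le_of_dvd hq hpq) (Nat.pos_of_dvd_of_pos hpq hq)
  have hlt : ∀ c < p, q / p * c < q := fun c hc =>
    (Nat.mul_lt_mul_left hqp).2 hc |>.trans_eq (Nat.div_mul_cancel hpq)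
  rw [mul_sub, sub_eq_zero, ← Nat.cast_mul, ← Nat.cast_mul, ZMod.natCast_eq_natCast_iff',
    Nat.mod_eq_of_lt (hlt a ha), Nat.mod_eq_of_lt (hlt b hb), Nat.mul_left_cancel_iff hqp]

lemma sum_range_stdAddChar_pow (hpq : p ∣ q) {a b : ℕ} (ha : a < p) (hb : b < p) :
    ∑ v ∈ range p, ZMod.stdAddChar (((q / p : ℕ) : ZMod q) * ((a : ZMod q) - (b : ZMod q))) ^ v
      = if a = b then (p : ℂ) else 0 := by
  split_ifs with hab
  · simp [hab]
  · exact sum_range_stdAddChar_pow_eq_zero (nsmul_natCast_div_mul_eq_zero hpq _)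
      (mt (natCast_div_mul_sub_eq_zero_iff hpq ha hb).1 hab)

lemma sum_range_stdAddChar_add_eq_zero (hpq : p ∣ q) (x : ZMod q) (d : ℕ) {a b : ℕ}
    (ha : a < p) (hb : b < p) (hab : a ≠ b) :
    ∑ v ∈ range p, ZMod.stdAddChar
      (x + ((q / p : ℕ) : ZMod q) * (((v : ZMod q) - (d : ZMod q)) * ((a : ZMod q) - (b : ZMod q))))
      = 0 := by
  set y := ((q / p : ℕ) : ZMod q) * ((a : ZMod q) - (b : ZMod q)) with hy
  have h : ∀ v : ℕ, x + ((q / p : ℕ) : ZMod q) *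
      (((v : ZMod q) - (d : ZMod q)) * ((a : ZMod q) - (b : ZMod q))) = (x - d * y) + v • y :=
    fun v => by rw [nsmul_eq_mul, hy]; ring
  simp only [h, AddChar.map_add_eq_mul, AddChar.map_nsmul_eq_pow, ← mul_sum]
  rw [sum_range_stdAddChar_pow_eq_zero (nsmul_natCast_div_mul_eq_zero hpq _)
    (mt (natCast_div_mul_sub_eq_zero_iff hpq ha hb).1 hab), mul_zero]

end Characters

lemma sum_mul_sub_sum_mul_of_eq_off {ι R : Type*} [DecidableEq ι] [CommRing R] {s : Finset ι}
    {a x x' : ι → R} {L : ι} (hL : L ∈ s) (hx : ∀ l ∈ s, l ≠ L → x' l = x l) :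
    ∑ l ∈ s, a l * x' l - ∑ l ∈ s, a l * x l = a L * (x' L - x L) := by
  rw [← sum_sub_distrib, sum_eq_single_of_mem L hL fun l hl hne => by rw [hx l hl hne, sub_self],
    mul_sub]

lemma sum_mul_succ_sub_sum_mul_succ_of_eq_off {R : Type*} [CommRing R] {y y' : ℕ → R}
    {n γ₀ : ℕ} (hγ₀ : γ₀ ∈ Icc 1 n) (hy : ∀ γ ∈ Icc 1 n, γ ≠ γ₀ → y' γ = y γ) :
    ∑ γ ∈ Icc 1 (n - 1), y' γ * y' (γ + 1) - ∑ γ ∈ Icc 1 (n - 1), y γ * y (γ + 1)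
      = (y' γ₀ - y γ₀) *
        ((if 2 ≤ γ₀ then y (γ₀ - 1) else 0) + (if γ₀ < n then y (γ₀ + 1) else 0)) := by
  rw [mem_Icc] at hγ₀
  have hterm : ∀ γ ∈ Icc 1 (n - 1), y' γ * y' (γ + 1) - y γ * y (γ + 1)
      = (if γ = γ₀ then (y' γ₀ - y γ₀) * y (γ₀ + 1) else 0)
        + (if γ = γ₀ - 1 then (y' γ₀ - y γ₀) * y (γ₀ - 1) else 0) := by
    intro γ hγ
    rw [mem_Icc] at hγ
    by_cases h₁ : γ = γ₀
    · subst h₁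
      rw [if_pos rfl, if_neg (by omega), hy (γ + 1) (mem_Icc.2 (by omega)) (by omega)]
      ring
    by_cases h₂ : γ = γ₀ - 1
    · subst h₂
      rw [if_neg h₁, if_pos rfl, hy _ (mem_Icc.2 (by omega)) h₁, Nat.sub_add_cancel hγ₀.1]
      ring
    · rw [if_neg h₁, if_neg h₂, hy γ (mem_Icc.2 (by omega)) h₁,
        hy (γ + 1) (mem_Icc.2 (by omega)) (by omega)]
      ring
  rw [← sum_sub_distrib, sum_congr rfl hterm, sum_add_distrib, sum_ite_eq', sum_ite_eq']
  have h₁ : γ₀ ∈ Icc 1 (n - 1) ↔ γ₀ < n := by rw [mem_Icc]; omega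
  have h₂ : γ₀ - 1 ∈ Icc 1 (n - 1) ↔ 2 ≤ γ₀ := by rw [mem_Icc]; omega
  simp only [h₁, h₂]
  split_ifs <;> ring

/-- `pmap β` lists the chain `S_β` as `π_β(1), …, π_β(mcard β)`; the chains partition
`{1, …, m}`. -/
structure IsChainPartition (m k : ℕ) (mcard : ℕ → ℕ) (pmap : ℕ → ℕ → ℕ) : Prop where
  one_le_card : ∀ β ∈ Icc 1 k, 1 ≤ mcard β
  pmap_mem : ∀ β ∈ Icc 1 k, ∀ γ ∈ Icc 1 (mcard β), pmap β γ ∈ Icc 1 m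
  existsUnique : ∀ l ∈ Icc 1 m, ∃! bg : ℕ × ℕ,
    bg.1 ∈ Icc 1 k ∧ bg.2 ∈ Icc 1 (mcard bg.1) ∧ pmap bg.1 bg.2 = l

namespace IsChainPartition

variable {m k : ℕ} {mcard : ℕ → ℕ} {pmap : ℕ → ℕ → ℕ}

lemma eq_of_pmap_eq (hπ : IsChainPartition m k mcard pmap) {β₁ γ₁ β₂ γ₂ : ℕ}
    (h₁ : β₁ ∈ Icc 1 k) (h₂ : γ₁ ∈ Icc 1 (mcard β₁)) (h₃ : β₂ ∈ Icc 1 k)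
    (h₄ : γ₂ ∈ Icc 1 (mcard β₂)) (heq : pmap β₁ γ₁ = pmap β₂ γ₂) : β₁ = β₂ ∧ γ₁ = γ₂ := by
  obtain ⟨_, _, huniq⟩ := hπ.existsUnique _ (hπ.pmap_mem β₁ h₁ γ₁ h₂)
  exact Prod.ext_iff.1
    ((huniq (β₁, γ₁) ⟨h₁, h₂, rfl⟩).trans (huniq (β₂, γ₂) ⟨h₃, h₄, heq.symm⟩).symm)

lemma one_le (hπ : IsChainPartition m k mcard pmap) {β γ : ℕ} (hβ : β ∈ Icc 1 k)
    (hγ : γ ∈ Icc 1 (mcard β)) : 1 ≤ pmap β γ :=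
  (mem_Icc.1 (hπ.pmap_mem β hβ γ hγ)).1

lemma card_mem_Icc (hπ : IsChainPartition m k mcard pmap) {β : ℕ} (hβ : β ∈ Icc 1 k) :
    mcard β ∈ Icc 1 (mcard β) :=
  mem_Icc.2 ⟨hπ.one_le_card β hβ, le_rfl⟩

lemma one_mem_Icc (hπ : IsChainPartition m k mcard pmap) {β : ℕ} (hβ : β ∈ Icc 1 k) :
    1 ∈ Icc 1 (mcard β) :=
  mem_Icc.2 ⟨le_rfl, hπ.one_le_card β hβ⟩

variable {R : Type*} [CommRing R] {x x' : ℕ → R} {β₀ γ₀ : ℕ}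

lemma pathSum_sub (hπ : IsChainPartition m k mcard pmap) (hβ₀ : β₀ ∈ Icc 1 k)
    (hγ₀ : γ₀ ∈ Icc 1 (mcard β₀)) (hx : ∀ l ∈ Icc 1 m, l ≠ pmap β₀ γ₀ → x' l = x l) :
    ∑ β ∈ Icc 1 k, ∑ γ ∈ Icc 1 (mcard β - 1), x' (pmap β γ) * x' (pmap β (γ + 1))
      - ∑ β ∈ Icc 1 k, ∑ γ ∈ Icc 1 (mcard β - 1), x (pmap β γ) * x (pmap β (γ + 1))
      = (x' (pmap β₀ γ₀) - x (pmap β₀ γ₀)) *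
        ((if 2 ≤ γ₀ then x (pmap β₀ (γ₀ - 1)) else 0)
          + (if γ₀ < mcard β₀ then x (pmap β₀ (γ₀ + 1)) else 0)) := by
  have hchain : ∀ β ∈ Icc 1 k, ∀ γ ∈ Icc 1 (mcard β), (β, γ) ≠ (β₀, γ₀) →
      x' (pmap β γ) = x (pmap β γ) := fun β hβ γ hγ hne =>
    hx _ (hπ.pmap_mem β hβ γ hγ) fun h => hne (Prod.ext_iff.2 (hπ.eq_of_pmap_eq hβ hγ hβ₀ hγ₀ h))
  rw [← sum_sub_distrib, sum_eq_single_of_mem β₀ hβ₀ fun β hβ hne => ?_]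
  · exact sum_mul_succ_sub_sum_mul_succ_of_eq_off hγ₀
      fun γ hγ hne => hchain β₀ hβ₀ γ hγ (by simp [hne])
  · rw [sub_eq_zero]
    refine sum_congr rfl fun γ hγ => ?_
    rw [mem_Icc] at hγ
    rw [hchain β hβ γ (mem_Icc.2 (by omega)) (by simp [hne]),
      hchain β hβ (γ + 1) (mem_Icc.2 (by omega)) (by simp [hne])]

lemma lastSum_sub (hπ : IsChainPartition m k mcard pmap) (hβ₀ : β₀ ∈ Icc 1 k)
    (hγ₀ : γ₀ ∈ Icc 1 (mcard β₀)) (hx : ∀ l ∈ Icc 1 m, l ≠ pmap β₀ γ₀ → x' l = x l)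
    (e : ℕ → R) :
    ∑ β ∈ Icc 1 k, e β * x' (pmap β (mcard β)) - ∑ β ∈ Icc 1 k, e β * x (pmap β (mcard β))
      = (if γ₀ = mcard β₀ then e β₀ else 0) * (x' (pmap β₀ γ₀) - x (pmap β₀ γ₀)) := by
  have hlast : ∀ β ∈ Icc 1 k, (β, mcard β) ≠ (β₀, γ₀) →
      x' (pmap β (mcard β)) = x (pmap β (mcard β)) := fun β hβ hne =>
    hx _ (hπ.pmap_mem β hβ _ (hπ.card_mem_Icc hβ))
      fun h => hne (Prod.ext_iff.2 (hπ.eq_of_pmap_eq hβ (hπ.card_mem_Icc hβ) hβ₀ hγ₀ h))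
  split_ifs with h
  · subst h
    exact sum_mul_sub_sum_mul_of_eq_off (x := fun β => x (pmap β (mcard β)))
      (x' := fun β => x' (pmap β (mcard β))) hβ₀ fun β hβ hne => hlast β hβ (by simp [hne])
  · rw [zero_mul, sub_eq_zero]
    refine sum_congr rfl fun β hβ => ?_
    rw [hlast β hβ (by simp only [ne_eq, Prod.mk.injEq]; rintro ⟨rfl, h'⟩; exact h h'.symm)]

end IsChainPartition

noncomputable def pivot (k : ℕ) (mcard : ℕ → ℕ) (pmap : ℕ → ℕ → ℕ) (D : Finset ℕ) : ℕ :=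
  let β := sInf {β | β ∈ Icc 1 k ∧ ∃ γ ∈ Icc 1 (mcard β), pmap β γ ∈ D}
  pmap β (sInf {γ | γ ∈ Icc 1 (mcard β) ∧ pmap β γ ∈ D} - 1)

lemma IsChainPartition.exists_pivot {m k : ℕ} {mcard : ℕ → ℕ} {pmap : ℕ → ℕ → ℕ}
    (hπ : IsChainPartition m k mcard pmap) {D : Finset ℕ} (hD : D ⊆ Icc 1 m) (hne : D.Nonempty)
    (hfirst : ∀ β ∈ Icc 1 k, pmap β 1 ∉ D) :
    ∃ β ∈ Icc 1 k, ∃ γ ∈ Icc 1 (mcard β), γ < mcard β ∧ pmap β (γ + 1) ∈ D ∧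
      (∀ γ' ∈ Icc 1 γ, pmap β γ' ∉ D) ∧ pivot k mcard pmap D = pmap β γ := by
  obtain ⟨l, hl⟩ := hne
  obtain ⟨⟨b, g⟩, ⟨hb, hg, rfl⟩, -⟩ := hπ.existsUnique l (hD hl)
  obtain ⟨hβ, hex⟩ : sInf {β | β ∈ Icc 1 k ∧ ∃ γ ∈ Icc 1 (mcard β), pmap β γ ∈ D}
      ∈ {β | β ∈ Icc 1 k ∧ ∃ γ ∈ Icc 1 (mcard β), pmap β γ ∈ D} :=
    Nat.sInf_mem ⟨b, hb, g, hg, hl⟩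
  set β := sInf {β | β ∈ Icc 1 k ∧ ∃ γ ∈ Icc 1 (mcard β), pmap β γ ∈ D}
  obtain ⟨hγ, hγD⟩ : sInf {γ | γ ∈ Icc 1 (mcard β) ∧ pmap β γ ∈ D}
      ∈ {γ | γ ∈ Icc 1 (mcard β) ∧ pmap β γ ∈ D} := Nat.sInf_mem hex
  set γ := sInf {γ | γ ∈ Icc 1 (mcard β) ∧ pmap β γ ∈ D}
  rw [mem_Icc] at hγ
  have hγ₁ : γ ≠ 1 := fun h => hfirst β hβ (h ▸ hγD)
  refine ⟨β, hβ, γ - 1, mem_Icc.2 (by omega), by omega, by rwa [Nat.sub_add_cancel hγ.1],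
    fun γ' hγ' hγ'D => ?_, rfl⟩
  rw [mem_Icc] at hγ'
  have := Nat.sInf_le (show γ' ∈ {γ | γ ∈ Icc 1 (mcard β) ∧ pmap β γ ∈ D} from
    ⟨mem_Icc.2 (by omega), hγ'D⟩)
  omega

/-- Starting points of the pairs `(i, i + s)` whose terms survive the sum over `σ`. -/
def shiftPairs (p m s k : ℕ) (pmap : ℕ → ℕ → ℕ) : Finset ℕ :=
  (range (p ^ m - s)).filter
    fun i => ∀ β ∈ (Icc 1 k : Finset ℕ), dig p i (pmap β 1) = dig p (i + s) (pmap β 1)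

section ShiftPairs

variable {p m s k : ℕ} {mcard : ℕ → ℕ} {pmap : ℕ → ℕ → ℕ}

lemma setDigit_mem_shiftPairs (hp : 0 < p) (hπ : IsChainPartition m k mcard pmap) {i L v : ℕ}
    (hi : i ∈ shiftPairs p m s k pmap) (hL : L ∈ Icc 1 m) (hagree : dig p i L = dig p (i + s) L)
    (hv : v < p) : setDigit p i L v ∈ shiftPairs p m s k pmap := by
  rw [mem_Icc] at hL
  rw [shiftPairs, mem_filter, mem_range] at hi ⊢
  have hshift := setDigit_add_of_dig_eq hL.1 hagree v
  refine ⟨?_, fun β hβ => ?_⟩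
  · have := setDigit_lt hp hL.1 hL.2 (show i + s < p ^ m by omega) hv
    omega
  · rw [hshift]
    exact (dig_setDigit_eq_dig_setDigit_iff hp (hπ.one_le hβ (hπ.one_mem_Icc hβ)) hL.1 hv
      hagree).2 (hi.2 β hβ)

lemma IsChainPartition.exists_pivot_digitDiff (hπ : IsChainPartition m k mcard pmap) (hs : 0 < s)
    {i : ℕ} (hi : i ∈ shiftPairs p m s k pmap) :
    ∃ β ∈ Icc 1 k, ∃ γ ∈ Icc 1 (mcard β), γ < mcard β ∧
      dig p i (pmap β (γ + 1)) ≠ dig p (i + s) (pmap β (γ + 1)) ∧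
      (∀ γ' ∈ Icc 1 γ, dig p i (pmap β γ') = dig p (i + s) (pmap β γ')) ∧
      pivot k mcard pmap (digitDiff p m i (i + s)) = pmap β γ := by
  rw [shiftPairs, mem_filter, mem_range] at hi
  have hne : (digitDiff p m i (i + s)).Nonempty := by
    by_contra! h
    refine Nat.ne_of_lt (Nat.lt_add_of_pos_right hs) (eq_of_dig_eq (show i < p ^ m by omega)
      (show i + s < p ^ m by omega) fun l hl => ?_)
    by_contra hl'
    exact (eq_empty_iff_forall_notMem.1 h) l (mem_filter.2 ⟨hl, hl'⟩)
  obtain ⟨β, hβ, γ, hγ, hlt, hnext, hbefore, hpiv⟩ := hπ.exists_pivot (filter_subset _ _) hne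
    fun β hβ h => (mem_filter.1 h).2 (hi.2 β hβ)
  refine ⟨β, hβ, γ, hγ, hlt, (mem_filter.1 hnext).2, fun γ' hγ' => ?_, hpiv⟩
  rw [mem_Icc] at hγ hγ'
  by_contra h
  exact hbefore γ' (mem_Icc.2 hγ')
    (mem_filter.2 ⟨hπ.pmap_mem β hβ γ' (mem_Icc.2 ⟨hγ'.1, hγ'.2.trans hγ.2⟩), h⟩)

end ShiftPairs

section Construction

variable {p q m k : ℕ} {mcard : ℕ → ℕ} {pmap : ℕ → ℕ → ℕ} {lam : ℕ → ZMod q}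

lemma aseq_zero_eq (t r : ℕ) :
    aseq p q m 0 k mcard pmap lam t 0 r
      = ((q / p : ℕ) : ZMod q) * ∑ β ∈ Icc 1 k, ∑ γ ∈ Icc 1 (mcard β - 1),
          (dig p r (pmap β γ) : ZMod q) * (dig p r (pmap β (γ + 1)) : ZMod q)
        + (∑ l ∈ Icc 1 m, lam l * (dig p r l : ZMod q) + lam 0)
        + ((q / p : ℕ) : ZMod q) * ∑ β ∈ Icc 1 k,
          (dig p t β : ZMod q) * (dig p r (pmap β (mcard β)) : ZMod q) := by
  simp only [aseq, dig, Nat.zero_div, Nat.zero_mod, zero_mul, sum_const_zero, zero_add,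
    show Icc 1 0 = (∅ : Finset ℕ) from rfl, sum_empty, add_zero]
  push_cast
  ring

lemma aseq_eq_aseq_zero_add (t σ r : ℕ) :
    aseq p q m 0 k mcard pmap lam t σ r
      = aseq p q m 0 k mcard pmap lam t 0 r
        + ((q / p : ℕ) : ZMod q) * ∑ β ∈ Icc 1 k,
          (dig p σ β : ZMod q) * (dig p r (pmap β 1) : ZMod q) := by
  simp only [aseq, dig, Nat.zero_div, Nat.zero_mod, zero_mul, sum_const_zero]
  push_cast
  ring

lemma aseq_zero_setDigit (hp : 0 < p) (hπ : IsChainPartition m k mcard pmap) {β₀ γ₀ : ℕ}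
    (hβ₀ : β₀ ∈ Icc 1 k) (hγ₀ : γ₀ ∈ Icc 1 (mcard β₀)) (t r : ℕ) {v : ℕ} (hv : v < p) :
    aseq p q m 0 k mcard pmap lam t 0 (setDigit p r (pmap β₀ γ₀) v)
      = aseq p q m 0 k mcard pmap lam t 0 r
        + ((q / p : ℕ) : ZMod q) * (((v : ZMod q) - (dig p r (pmap β₀ γ₀) : ZMod q)) *
          ((if 2 ≤ γ₀ then (dig p r (pmap β₀ (γ₀ - 1)) : ZMod q) else 0)
            + (if γ₀ < mcard β₀ then (dig p r (pmap β₀ (γ₀ + 1)) : ZMod q) else 0)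
            + (if γ₀ = mcard β₀ then (dig p t β₀ : ZMod q) else 0)))
        + lam (pmap β₀ γ₀) * ((v : ZMod q) - (dig p r (pmap β₀ γ₀) : ZMod q)) := by
  have hL := hπ.one_le hβ₀ hγ₀
  have hx : ∀ l ∈ Icc 1 m, l ≠ pmap β₀ γ₀ →
      (dig p (setDigit p r (pmap β₀ γ₀) v) l : ZMod q) = dig p r l := fun l hl hne => by
    rw [dig_setDigit_of_ne hp hL (mem_Icc.1 hl).1 hne _ hv]
  have hpath := hπ.pathSum_sub hβ₀ hγ₀ hx
  have hlast := hπ.lastSum_sub hβ₀ hγ₀ hx fun β => (dig p t β : ZMod q)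
  have hlin := sum_mul_sub_sum_mul_of_eq_off (a := lam) (hπ.pmap_mem β₀ hβ₀ γ₀ hγ₀) hx
  simp only [dig_setDigit_self hp hL r hv] at hpath hlast hlin
  rw [aseq_zero_eq, aseq_zero_eq]
  linear_combination ((q / p : ℕ) : ZMod q) * hpath + hlin + ((q / p : ℕ) : ZMod q) * hlast

variable [NeZero q]

lemma sum_range_stdAddChar_aseq_sub (hpq : p ∣ q) (t₁ t₂ i j : ℕ) :
    ∑ σ ∈ range (p ^ k), ZMod.stdAddChar
        (aseq p q m 0 k mcard pmap lam t₁ σ i - aseq p q m 0 k mcard pmap lam t₂ σ j)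
      = if ∀ β ∈ Icc 1 k, dig p i (pmap β 1) = dig p j (pmap β 1) then
          (p : ℂ) ^ k * ZMod.stdAddChar
            (aseq p q m 0 k mcard pmap lam t₁ 0 i - aseq p q m 0 k mcard pmap lam t₂ 0 j)
        else 0 := by
  have hp : 0 < p := Nat.pos_of_dvd_of_pos hpq (NeZero.pos q)
  set y : ℕ → ZMod q := fun β =>
    ((q / p : ℕ) : ZMod q) * ((dig p i (pmap β 1) : ZMod q) - (dig p j (pmap β 1) : ZMod q))
  have hσ : ∀ σ, ZMod.stdAddChar
      (aseq p q m 0 k mcard pmap lam t₁ σ i - aseq p q m 0 k mcard pmap lam t₂ σ j)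
      = ZMod.stdAddChar
          (aseq p q m 0 k mcard pmap lam t₁ 0 i - aseq p q m 0 k mcard pmap lam t₂ 0 j)
        * ∏ β ∈ Icc 1 k, ZMod.stdAddChar (y β) ^ dig p σ β := by
    intro σ
    have hdiff : ((q / p : ℕ) : ZMod q) * ∑ β ∈ Icc 1 k,
          (dig p σ β : ZMod q) * (dig p i (pmap β 1) : ZMod q)
        - ((q / p : ℕ) : ZMod q) * ∑ β ∈ Icc 1 k,
          (dig p σ β : ZMod q) * (dig p j (pmap β 1) : ZMod q)
        = ∑ β ∈ Icc 1 k, dig p σ β • y β := by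
      rw [mul_sum, mul_sum, ← sum_sub_distrib]
      exact sum_congr rfl fun β _ => by rw [nsmul_eq_mul]; ring
    rw [aseq_eq_aseq_zero_add t₁ σ i, aseq_eq_aseq_zero_add t₂ σ j, add_sub_add_comm, hdiff,
      AddChar.map_add_eq_mul, AddChar.map_sum_eq_prod]
    simp only [AddChar.map_nsmul_eq_pow]
  rw [sum_congr rfl fun σ _ => hσ σ, ← mul_sum,
    sum_range_pow_prod_dig k fun β v => (ZMod.stdAddChar (y β) : ℂ) ^ v,
    prod_congr rfl fun β _ => sum_range_stdAddChar_pow hpq (dig_lt hp i _) (dig_lt hp j _),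
    prod_ite_zero, prod_const, Nat.card_Icc, Nat.add_sub_cancel]
  split_ifs <;> ring

lemma sum_stdAddChar_aseq_sub_eq_zero_of_ne (hπ : IsChainPartition m k mcard pmap)
    (hpq : p ∣ q) {t₁ t₂ : ℕ} (ht₁ : t₁ < p ^ k) (ht₂ : t₂ < p ^ k) (hne : t₁ ≠ t₂) :
    ∑ i ∈ range (p ^ m), ZMod.stdAddChar
      (aseq p q m 0 k mcard pmap lam t₁ 0 i - aseq p q m 0 k mcard pmap lam t₂ 0 i) = 0 := by
  have hp : 0 < p := Nat.pos_of_dvd_of_pos hpq (NeZero.pos q)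
  obtain ⟨β, hβ, hβt⟩ : ∃ β ∈ Icc 1 k, dig p t₁ β ≠ dig p t₂ β := by
    by_contra! h
    exact hne (eq_of_dig_eq ht₁ ht₂ h)
  have hγ := hπ.card_mem_Icc hβ
  have hL := mem_Icc.1 (hπ.pmap_mem β hβ _ hγ)
  refine sum_eq_zero_of_sum_setDigit_eq_zero hp (pos := fun _ => pmap β (mcard β))
    (fun _ _ => hL.1)
    (fun i hi v hv => mem_range.2 (setDigit_lt hp hL.1 hL.2 (mem_range.1 hi) hv))
    (fun _ _ _ _ => rfl) fun i _ => ?_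
  rw [← sum_range_stdAddChar_add_eq_zero hpq
    (aseq p q m 0 k mcard pmap lam t₁ 0 i - aseq p q m 0 k mcard pmap lam t₂ 0 i)
    (dig p i (pmap β (mcard β))) (dig_lt hp t₁ β) (dig_lt hp t₂ β) hβt]
  refine sum_congr rfl fun v hv => ?_
  rw [aseq_zero_setDigit hp hπ hβ hγ t₁ i (mem_range.1 hv),
    aseq_zero_setDigit hp hπ hβ hγ t₂ i (mem_range.1 hv), if_pos rfl, if_pos rfl]
  congr 1
  ring

lemma sum_shiftPairs_stdAddChar_aseq_sub_eq_zero (hπ : IsChainPartition m k mcard pmap)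
    (hpq : p ∣ q) (t₁ t₂ : ℕ) {s : ℕ} (hs : 0 < s) :
    ∑ i ∈ shiftPairs p m s k pmap, ZMod.stdAddChar
      (aseq p q m 0 k mcard pmap lam t₁ 0 i - aseq p q m 0 k mcard pmap lam t₂ 0 (i + s)) = 0 := by
  have hp : 0 < p := Nat.pos_of_dvd_of_pos hpq (NeZero.pos q)
  refine sum_eq_zero_of_sum_setDigit_eq_zero hp
    (pos := fun i => pivot k mcard pmap (digitDiff p m i (i + s))) ?_ ?_ ?_ ?_ <;>
  intro i hi <;>
  obtain ⟨β, hβ, γ, hγ, hlt, hnext, hbefore, hpiv⟩ := hπ.exists_pivot_digitDiff hs hi <;>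
  have hagree := hbefore γ (mem_Icc.2 ⟨(mem_Icc.1 hγ).1, le_rfl⟩) <;>
  have hL := hπ.one_le hβ hγ <;>
  rw [hpiv]
  · exact hL
  · exact fun v hv => setDigit_mem_shiftPairs hp hπ hi (hπ.pmap_mem β hβ γ hγ) hagree hv
  · intro v hv
    rw [setDigit_add_of_dig_eq hL hagree, digitDiff_setDigit hp hL hv hagree, hpiv]
  · have hprev : (if 2 ≤ γ then (dig p i (pmap β (γ - 1)) : ZMod q) else 0)
        = if 2 ≤ γ then (dig p (i + s) (pmap β (γ - 1)) : ZMod q) else 0 := by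
      split_ifs with h
      · rw [hbefore (γ - 1) (mem_Icc.2 ⟨by omega, by omega⟩)]
      · rfl
    rw [← sum_range_stdAddChar_add_eq_zero hpq
      (aseq p q m 0 k mcard pmap lam t₁ 0 i - aseq p q m 0 k mcard pmap lam t₂ 0 (i + s))
      (dig p i (pmap β γ)) (dig_lt hp i _) (dig_lt hp (i + s) _) hnext]
    refine sum_congr rfl fun v hv => ?_
    rw [setDigit_add_of_dig_eq hL hagree, aseq_zero_setDigit hp hπ hβ hγ t₁ i (mem_range.1 hv),
      aseq_zero_setDigit hp hπ hβ hγ t₂ (i + s) (mem_range.1 hv), if_pos hlt, if_pos hlt,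
      if_neg hlt.ne, if_neg hlt.ne, hprev, ← hagree]
    congr 1
    ring

lemma sum_sum_stdAddChar_aseq_sub_eq_zero (hπ : IsChainPartition m k mcard pmap) (hpq : p ∣ q)
    {t₁ t₂ s : ℕ} (ht₁ : t₁ < p ^ k) (ht₂ : t₂ < p ^ k) (hst : s ≠ 0 ∨ t₁ ≠ t₂) :
    ∑ σ ∈ range (p ^ k), ∑ i ∈ range (p ^ m - s), ZMod.stdAddChar
      (aseq p q m 0 k mcard pmap lam t₁ σ i - aseq p q m 0 k mcard pmap lam t₂ σ (i + s)) = 0 := by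
  rw [sum_comm]
  simp only [sum_range_stdAddChar_aseq_sub hpq]
  rw [← sum_filter, ← mul_sum]
  change (p : ℂ) ^ k * ∑ i ∈ shiftPairs p m s k pmap, _ = 0
  rcases Nat.eq_zero_or_pos s with rfl | hs
  · have hall : shiftPairs p m 0 k pmap = range (p ^ m) :=
      filter_true_of_mem fun _ _ _ _ => rfl
    simp only [hall, add_zero]
    rw [sum_stdAddChar_aseq_sub_eq_zero_of_ne hπ hpq ht₁ ht₂ (hst.resolve_left (by simp)),
      mul_zero]
  · rw [sum_shiftPairs_stdAddChar_aseq_sub_eq_zero hπ hpq t₁ t₂ hs, mul_zero]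

lemma sum_ccorr_aseq_eq_zero (hπ : IsChainPartition m k mcard pmap) (hpq : p ∣ q)
    {t₁ t₂ : ℕ} (ht₁ : t₁ < p ^ k) (ht₂ : t₂ < p ^ k) {τ : ℤ} (hτ : τ ≠ 0 ∨ t₁ ≠ t₂) :
    ∑ σ ∈ range (p ^ k), ccorr q (p ^ m) (aseq p q m 0 k mcard pmap lam t₁ σ)
      (aseq p q m 0 k mcard pmap lam t₂ σ) τ = 0 := by
  simp only [ccorr, eomega_eq_stdAddChar]
  by_cases h : 0 ≤ τ
  · simp only [if_pos h]
    exact sum_sum_stdAddChar_aseq_sub_eq_zero hπ hpq ht₁ ht₂ (hτ.imp (by omega) id)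
  · simp only [if_neg h]
    have h' := congrArg (starRingEnd ℂ) (sum_sum_stdAddChar_aseq_sub_eq_zero (lam := lam) hπ hpq
      ht₂ ht₁ (s := (-τ).toNat) (hτ.imp (by omega) Ne.symm))
    simpa only [map_sum, ← AddChar.map_neg_eq_conj, neg_sub, map_zero] using h'

end Construction

lemma acorr_zero (q N : ℕ) (u : ℕ → ZMod q) : acorr q N u 0 = N := by
  simp [acorr, ccorr, eomega]

theorem ccc_construction_general
    (p q m k : ℕ) (hq : 0 < q) (hpq : p ∣ q)
    (mcard : ℕ → ℕ) (pmap : ℕ → ℕ → ℕ) (lam : ℕ → ZMod q)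
    (hmcard : ∀ β ∈ Finset.Icc 1 k, 1 ≤ mcard β)
    (hmaps : ∀ β ∈ Finset.Icc 1 k, ∀ γ ∈ Finset.Icc 1 (mcard β),
      pmap β γ ∈ Finset.Icc 1 m)
    (hpart : ∀ l ∈ Finset.Icc 1 m, ∃! bg : ℕ × ℕ,
      bg.1 ∈ Finset.Icc 1 k ∧ bg.2 ∈ Finset.Icc 1 (mcard bg.1) ∧ pmap bg.1 bg.2 = l) :
    (∀ t < p ^ k,
      (∑ σ ∈ Finset.range (p ^ k),
        acorr q (p ^ m) (aseq p q m 0 k mcard pmap lam t σ) 0 = (p : ℂ) ^ (k + m)) ∧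
      ∀ τ : ℤ, 1 ≤ τ.natAbs → τ.natAbs ≤ p ^ m - 1 →
        ∑ σ ∈ Finset.range (p ^ k),
          acorr q (p ^ m) (aseq p q m 0 k mcard pmap lam t σ) τ = 0) ∧
    (∀ t₁ < p ^ k, ∀ t₂ < p ^ k, t₁ ≠ t₂ → ∀ τ : ℤ, τ.natAbs ≤ p ^ m - 1 →
      ∑ σ ∈ Finset.range (p ^ k),
        ccorr q (p ^ m) (aseq p q m 0 k mcard pmap lam t₁ σ)
          (aseq p q m 0 k mcard pmap lam t₂ σ) τ = 0) := by
  have : NeZero q := ⟨hq.ne'⟩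
  have hπ : IsChainPartition m k mcard pmap := ⟨hmcard, hmaps, hpart⟩
  refine ⟨fun t ht => ⟨?_, fun τ hτ _ => ?_⟩, fun t₁ ht₁ t₂ ht₂ hne τ _ => ?_⟩
  · simp only [acorr_zero, sum_const, card_range, nsmul_eq_mul]
    push_cast
    ring
  · exact sum_ccorr_aseq_eq_zero hπ hpq ht ht (Or.inl (by omega))
  · exact sum_ccorr_aseq_eq_zero hπ hpq ht₁ ht₂ (Or.inr hne)

/-- with `δ = 0` the construction yields a `(p^k, p^k, p^m)`-CCC:
each code's autocorrelation sum is `p^(k+m)` at shift 0 and vanishes at every shift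
with `1 ≤ |τ| ≤ p^m - 1`, and distinct codes' cross-correlation sums vanish at every
shift with `|τ| ≤ p^m - 1`. -/
theorem ccc_construction
    (p q m k : ℕ) (hp : p.Prime) (hq : 0 < q) (hpq : p ∣ q)
    (hm : 3 ≤ m) (hk1 : 1 ≤ k) (hk2 : k ≤ m)
    (mcard : ℕ → ℕ) (pmap : ℕ → ℕ → ℕ) (lam : ℕ → ZMod q)
    (hmcard : ∀ β ∈ Finset.Icc 1 k, 1 ≤ mcard β)
    (hmaps : ∀ β ∈ Finset.Icc 1 k, ∀ γ ∈ Finset.Icc 1 (mcard β),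
      pmap β γ ∈ Finset.Icc 1 m)
    (hpart : ∀ l ∈ Finset.Icc 1 m, ∃! bg : ℕ × ℕ,
      bg.1 ∈ Finset.Icc 1 k ∧ bg.2 ∈ Finset.Icc 1 (mcard bg.1) ∧ pmap bg.1 bg.2 = l) :
    (∀ t < p ^ k,
      (∑ σ ∈ Finset.range (p ^ k),
        acorr q (p ^ m) (aseq p q m 0 k mcard pmap lam t σ) 0 = (p : ℂ) ^ (k + m)) ∧
      ∀ τ : ℤ, 1 ≤ τ.natAbs → τ.natAbs ≤ p ^ m - 1 →
        ∑ σ ∈ Finset.range (p ^ k),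
          acorr q (p ^ m) (aseq p q m 0 k mcard pmap lam t σ) τ = 0) ∧
    (∀ t₁ < p ^ k, ∀ t₂ < p ^ k, t₁ ≠ t₂ → ∀ τ : ℤ, τ.natAbs ≤ p ^ m - 1 →
      ∑ σ ∈ Finset.range (p ^ k),
        ccorr q (p ^ m) (aseq p q m 0 k mcard pmap lam t₁ σ)
          (aseq p q m 0 k mcard pmap lam t₂ σ) τ = 0) :=
  ccc_construction_general p q m k hq hpq mcard pmap lam hmcard hmaps hpart
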